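/- With respect to the simple roots r₁,…,r₆, every element v of the E₆ root set S can be written as v = n₁r₁ + n₂r₂ + n₃r₃ + n₄r₄ + n₅r₅ + n₆r₆ with integer coefficients nᵢ that are either all nonnegative or all nonpositive; the subset S⁺ of elements of S with all coefficients nonnegative (the positive roots) has exactly 36 elements, each of squared norm 2, and S is the disjoint union of S⁺ and −S⁺. -/

import Mathlib

noncomputable section

open scoped RealInnerProductSpace

/-- The standard orthonormal basis vectors `e₁, …, e₆` of `ℝ⁶` (0-indexed). -/
def e : Fin 6 → EuclideanSpace ℝ (Fin 6) := fun i => EuclideanSpace.single i 1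

/-- The simple roots of `E₆` (0-indexed as `r 0, …, r 5`). -/
def r : Fin 6 → EuclideanSpace ℝ (Fin 6) :=
  ![e 0 + e 1, e 1 - e 0, e 2 - e 1, e 3 - e 2, e 4 - e 3,
    (1/2 : ℝ) • (e 0 - e 1 - e 2 - e 3 - e 4 + Real.sqrt 3 • e 5)]

/-- The `E₆` root set: the vectors `±eᵢ±eⱼ` for `1 ≤ i < j ≤ 5`, together with the vectors
`(ε₁e₁+ε₂e₂+ε₃e₃+ε₄e₄+ε₅e₅+ε√3·e₆)/2` with all signs `±1` and `ε·ε₁ε₂ε₃ε₄ε₅ = 1`. -/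
def S : Set (EuclideanSpace ℝ (Fin 6)) :=
  {v | ∃ i j : Fin 6, i < j ∧ (j : ℕ) ≤ 4 ∧
    ∃ a b : ℝ, (a = 1 ∨ a = -1) ∧ (b = 1 ∨ b = -1) ∧ v = a • e i + b • e j} ∪
  {v | ∃ ε : Fin 6 → ℝ, (∀ k, ε k = 1 ∨ ε k = -1) ∧
    ε 5 * (ε 0 * ε 1 * ε 2 * ε 3 * ε 4) = 1 ∧
    v = (1/2 : ℝ) • (ε 0 • e 0 + ε 1 • e 1 + ε 2 • e 2 + ε 3 • e 3 + ε 4 • e 4 +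
      (ε 5 * Real.sqrt 3) • e 5)}

/-- The positive roots of `E₆`: the elements of `S` all of whose integer coefficients with
respect to the simple roots `r₁, …, r₆` are nonnegative. -/
def Spos : Set (EuclideanSpace ℝ (Fin 6)) :=
  {v | v ∈ S ∧ ∃ n : Fin 6 → ℤ, v = ∑ i, (n i : ℝ) • r i ∧ ∀ i, 0 ≤ n i}

/-!
All roots lie in the lattice of vectors `(d₁, …, d₅, √3 d₆) / 2` with `d ∈ ℤ⁶`, and so do the
simple roots. In these doubled coordinates `S` becomes an explicit set of 72 integer vectors, and
expanding in simple roots becomes multiplication by an integer matrix `A` with `4 A⁻¹` integral.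
Integrality and signs of the coefficients, the count of positive roots, their norms and the
symmetry `S = -S` are then finite computations. Disjointness of `S⁺` and `-S⁺` follows from the
linear independence of the simple roots: `v, -v ∈ S⁺` would force all coefficients of `v` to
vanish, while `0 ∉ S`.
-/

namespace E6

open Matrix

def scale (k : Fin 6) : ℝ := if k = 5 then Real.sqrt 3 / 2 else 1 / 2

lemma scale_ne_zero (k : Fin 6) : scale k ≠ 0 := by
  unfold scale; split_ifs <;> positivity

def ofDoubled : (Fin 6 → ℤ) →+ EuclideanSpace ℝ (Fin 6) :=
  AddMonoidHom.mk' (fun d => WithLp.toLp 2 fun k => d k * scale k) fun d d' => by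
    ext k; simp [add_mul]

lemma ofDoubled_apply (d : Fin 6 → ℤ) (k : Fin 6) : ofDoubled d k = d k * scale k := rfl

lemma ofDoubled_injective : Function.Injective ofDoubled := by
  intro d d' h
  funext k
  simpa [ofDoubled_apply, scale_ne_zero] using congrArg (· k) h

lemma ofDoubled_single {i : Fin 6} (hi : i ≠ 5) (a : ℤ) :
    ofDoubled (Pi.single i (2 * a)) = (a : ℝ) • e i := by
  ext k
  by_cases hk : k = i
  · subst hk; simp [ofDoubled_apply, e, scale, hi, mul_comm]
  · simp [ofDoubled_apply, e, hk]

lemma ofDoubled_single_add_single {i j : Fin 6} (hij : i < j) (hj : (j : ℕ) ≤ 4) (a b : ℤ) :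
    ofDoubled (Pi.single i (2 * a) + Pi.single j (2 * b)) = (a : ℝ) • e i + (b : ℝ) • e j := by
  rw [map_add, ofDoubled_single (by omega), ofDoubled_single (by omega)]

lemma ofDoubled_eq (d : Fin 6 → ℤ) :
    ofDoubled d = (1/2 : ℝ) • ((d 0 : ℝ) • e 0 + (d 1 : ℝ) • e 1 + (d 2 : ℝ) • e 2 +
      (d 3 : ℝ) • e 3 + (d 4 : ℝ) • e 4 + ((d 5 : ℝ) * Real.sqrt 3) • e 5) := by
  ext k
  fin_cases k <;> simp [ofDoubled_apply, e, scale, mul_comm, mul_left_comm, div_eq_inv_mul]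

lemma inner_ofDoubled_self (d : Fin 6 → ℤ) :
    ⟪ofDoubled d, ofDoubled d⟫ =
      ((d 0 ^ 2 + d 1 ^ 2 + d 2 ^ 2 + d 3 ^ 2 + d 4 ^ 2 + 3 * d 5 ^ 2 : ℤ) : ℝ) / 4 := by
  have h3 : Real.sqrt 3 ^ 2 = 3 := Real.sq_sqrt (by norm_num)
  simp only [PiLp.inner_apply, RCLike.inner_apply, conj_trivial, ofDoubled_apply,
    Fin.sum_univ_six, scale, Fin.reduceEq, ↓reduceIte]
  push_cast
  linear_combination (↑(d 5) ^ 2 / 4 : ℝ) * h3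

def simpleRootMatrix : Matrix (Fin 6) (Fin 6) ℤ :=
  !![2, -2, 0, 0, 0, 1; 2, 2, -2, 0, 0, -1; 0, 0, 2, -2, 0, -1; 0, 0, 0, 2, -2, -1;
    0, 0, 0, 0, 2, -1; 0, 0, 0, 0, 0, 1]

lemma r_eq_ofDoubled (i : Fin 6) : r i = ofDoubled (simpleRootMatrixᵀ i) := by
  ext k
  fin_cases i <;> fin_cases k <;>
    simp [r, e, ofDoubled_apply, scale, simpleRootMatrix, mul_comm, div_eq_inv_mul]

lemma sum_smul_r (n : Fin 6 → ℤ) :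
    ∑ i, (n i : ℝ) • r i = ofDoubled (simpleRootMatrix *ᵥ n) := by
  simp_rw [r_eq_ofDoubled, Int.cast_smul_eq_zsmul, ← map_zsmul, ← map_sum, mulVec_eq_sum,
    op_smul_eq_smul]

/-- `4 • simpleRootMatrix⁻¹`; its rows are four times the fundamental coweights. -/
def coweightMatrix : Matrix (Fin 6) (Fin 6) ℤ :=
  !![1, 1, 1, 1, 1, 3; -1, 1, 1, 1, 1, 5; 0, 0, 2, 2, 2, 6; 0, 0, 0, 2, 2, 4;
    0, 0, 0, 0, 2, 2; 0, 0, 0, 0, 0, 4]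

lemma coweightMatrix_mul_simpleRootMatrix : coweightMatrix * simpleRootMatrix = 4 := by
  decide

def rootCoeffs (d : Fin 6 → ℤ) : Fin 6 → ℤ := fun i => (coweightMatrix *ᵥ d) i / 4

lemma rootCoeffs_mulVec (n : Fin 6 → ℤ) : rootCoeffs (simpleRootMatrix *ᵥ n) = n := by
  funext i
  simp [rootCoeffs, mulVec_mulVec, coweightMatrix_mul_simpleRootMatrix, ofNat_mulVec]

lemma sum_smul_r_injective : Function.Injective fun n : Fin 6 → ℤ => ∑ i, (n i : ℝ) • r i := by
  intro n m h
  simp only [sum_smul_r] at h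
  rw [← rootCoeffs_mulVec n, ← rootCoeffs_mulVec m, ofDoubled_injective h]

def signs : Finset ℤ := {1, -1}

lemma eq_one_or_eq_neg_one_iff_exists_mem_signs {a : ℝ} :
    (a = 1 ∨ a = -1) ↔ ∃ s ∈ signs, (s : ℝ) = a := by
  simp [signs, eq_comm]

def doubledRootsA : Finset (Fin 6 → ℤ) :=
  ((Finset.univ.filter fun p : Fin 6 × Fin 6 => p.1 < p.2 ∧ (p.2 : ℕ) ≤ 4) ×ˢ
      (signs ×ˢ signs)).image
    fun x => Pi.single x.1.1 (2 * x.2.1) + Pi.single x.1.2 (2 * x.2.2)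

def doubledRootsB : Finset (Fin 6 → ℤ) :=
  (Fintype.piFinset fun _ => signs).filter fun d => d 5 * (d 0 * d 1 * d 2 * d 3 * d 4) = 1

def doubledRoots : Finset (Fin 6 → ℤ) := doubledRootsA ∪ doubledRootsB

lemma image_doubledRootsA : ofDoubled '' doubledRootsA = {v | ∃ i j : Fin 6, i < j ∧
    (j : ℕ) ≤ 4 ∧ ∃ a b : ℝ, (a = 1 ∨ a = -1) ∧ (b = 1 ∨ b = -1) ∧ v = a • e i + b • e j} := by
  ext v
  simp only [doubledRootsA, Finset.coe_image, Set.image_image, Set.mem_image, Finset.mem_coe,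
    Finset.mem_product, Finset.mem_filter, Finset.mem_univ, true_and, Set.mem_ofPred_eq,
    eq_one_or_eq_neg_one_iff_exists_mem_signs]
  constructor
  · rintro ⟨⟨⟨i, j⟩, a, b⟩, ⟨⟨hij, hj⟩, ha, hb⟩, rfl⟩
    exact ⟨i, j, hij, hj, a, b, ⟨a, ha, rfl⟩, ⟨b, hb, rfl⟩, ofDoubled_single_add_single hij hj a b⟩
  · rintro ⟨i, j, hij, hj, _, _, ⟨a, ha, rfl⟩, ⟨b, hb, rfl⟩, rfl⟩
    exact ⟨⟨⟨i, j⟩, a, b⟩, ⟨⟨hij, hj⟩, ha, hb⟩, ofDoubled_single_add_single hij hj a b⟩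

lemma image_doubledRootsB : ofDoubled '' doubledRootsB = {v | ∃ ε : Fin 6 → ℝ,
    (∀ k, ε k = 1 ∨ ε k = -1) ∧ ε 5 * (ε 0 * ε 1 * ε 2 * ε 3 * ε 4) = 1 ∧
    v = (1/2 : ℝ) • (ε 0 • e 0 + ε 1 • e 1 + ε 2 • e 2 + ε 3 • e 3 + ε 4 • e 4 +
      (ε 5 * Real.sqrt 3) • e 5)} := by
  ext v
  simp only [doubledRootsB, Finset.coe_filter, Set.mem_image, Set.mem_ofPred_eq,
    Fintype.mem_piFinset, eq_one_or_eq_neg_one_iff_exists_mem_signs]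
  constructor
  · rintro ⟨d, ⟨hd, hprod⟩, rfl⟩
    exact ⟨fun k => d k, fun k => ⟨d k, hd k, rfl⟩, by dsimp only; exact_mod_cast hprod,
      ofDoubled_eq d⟩
  · rintro ⟨ε, hε, hprod, rfl⟩
    choose d hd hdε using hε
    obtain rfl : ε = fun k => (d k : ℝ) := funext fun k => (hdε k).symm
    exact ⟨d, ⟨hd, by dsimp only at hprod; exact_mod_cast hprod⟩, ofDoubled_eq d⟩

lemma mem_S_iff {v : EuclideanSpace ℝ (Fin 6)} :
    v ∈ S ↔ ∃ d ∈ doubledRoots, ofDoubled d = v := by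
  rw [S, ← image_doubledRootsA, ← image_doubledRootsB, ← Set.image_union, ← Finset.coe_union]
  rfl

def doubledPosRoots : Finset (Fin 6 → ℤ) :=
  doubledRoots.filter fun d => ∀ i, 0 ≤ rootCoeffs d i

lemma simpleRootMatrix_mulVec_rootCoeffs :
    ∀ d ∈ doubledRoots, simpleRootMatrix *ᵥ rootCoeffs d = d := by
  decide +kernel

lemma rootCoeffs_nonneg_or_nonpos :
    ∀ d ∈ doubledRoots, (∀ i, 0 ≤ rootCoeffs d i) ∨ ∀ i, rootCoeffs d i ≤ 0 := by
  decide +kernel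

lemma card_doubledPosRoots : doubledPosRoots.card = 36 := by
  decide +kernel

lemma neg_mem_doubledRoots : ∀ d ∈ doubledRoots, -d ∈ doubledRoots := by
  decide +kernel

lemma doubled_sq_norm_of_mem_doubledRoots :
    ∀ d ∈ doubledRoots, d 0 ^ 2 + d 1 ^ 2 + d 2 ^ 2 + d 3 ^ 2 + d 4 ^ 2 + 3 * d 5 ^ 2 = 8 := by
  decide +kernel

lemma ofDoubled_eq_sum_smul_r {d : Fin 6 → ℤ} (hd : d ∈ doubledRoots) :
    ofDoubled d = ∑ i, (rootCoeffs d i : ℝ) • r i := by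
  rw [sum_smul_r, simpleRootMatrix_mulVec_rootCoeffs d hd]

lemma exists_coeffs_of_mem_S {v : EuclideanSpace ℝ (Fin 6)} (hv : v ∈ S) :
    ∃ n : Fin 6 → ℤ, v = ∑ i, (n i : ℝ) • r i ∧ ((∀ i, 0 ≤ n i) ∨ (∀ i, n i ≤ 0)) := by
  obtain ⟨d, hd, rfl⟩ := mem_S_iff.1 hv
  exact ⟨rootCoeffs d, ofDoubled_eq_sum_smul_r hd, rootCoeffs_nonneg_or_nonpos d hd⟩

lemma neg_mem_S {v : EuclideanSpace ℝ (Fin 6)} (hv : v ∈ S) : -v ∈ S := by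
  obtain ⟨d, hd, rfl⟩ := mem_S_iff.1 hv
  exact mem_S_iff.2 ⟨-d, neg_mem_doubledRoots d hd, map_neg ofDoubled d⟩

lemma inner_self_of_mem_S {v : EuclideanSpace ℝ (Fin 6)} (hv : v ∈ S) : ⟪v, v⟫ = 2 := by
  obtain ⟨d, hd, rfl⟩ := mem_S_iff.1 hv
  rw [inner_ofDoubled_self, doubled_sq_norm_of_mem_doubledRoots d hd]
  norm_num

lemma Spos_eq_image : Spos = ofDoubled '' doubledPosRoots := by
  ext v
  constructor
  · rintro ⟨hv, n, rfl, hn⟩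
    obtain ⟨d, hd, hdn⟩ := mem_S_iff.1 hv
    have hcoeffs : rootCoeffs d = n := by
      rw [← rootCoeffs_mulVec n, ofDoubled_injective (hdn.trans (sum_smul_r n))]
    exact ⟨d, Finset.mem_filter.2 ⟨hd, hcoeffs ▸ hn⟩, hdn⟩
  · rintro ⟨d, hd, rfl⟩
    obtain ⟨hd, hpos⟩ := Finset.mem_filter.1 hd
    exact ⟨mem_S_iff.2 ⟨d, hd, rfl⟩, rootCoeffs d, ofDoubled_eq_sum_smul_r hd, hpos⟩

lemma ncard_Spos : Spos.ncard = 36 := by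
  rw [Spos_eq_image, Set.ncard_image_of_injective _ ofDoubled_injective, Set.ncard_coe_finset,
    card_doubledPosRoots]

lemma S_eq_Spos_union_neg : S = Spos ∪ -Spos := by
  ext v
  refine ⟨fun hv => ?_, ?_⟩
  · obtain ⟨n, rfl, hn | hn⟩ := exists_coeffs_of_mem_S hv
    · exact Or.inl ⟨hv, n, rfl, hn⟩
    · exact Or.inr ⟨neg_mem_S hv, -n, by simp [Finset.sum_neg_distrib],
        fun i => by simpa using hn i⟩
  · rintro (hv | hv)
    · exact hv.1
    · simpa using neg_mem_S hv.1

lemma disjoint_Spos_neg : Disjoint Spos (-Spos) := by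
  rw [Set.disjoint_left]
  rintro v ⟨hv, n, rfl, hn⟩ ⟨-, m, hm, hm'⟩
  have hnm : n + m = 0 := sum_smul_r_injective <| by
    simp [add_smul, Finset.sum_add_distrib, ← hm]
  have hn0 : n = 0 := funext fun i => show n i = 0 by
    linarith [hn i, hm' i, show n i + m i = 0 from congrFun hnm i]
  have := inner_self_of_mem_S hv
  simp [hn0] at this

end E6

/-- Every `E₆` root is an integral combination of the simple roots with coefficients either
all nonnegative or all nonpositive; there are exactly `36` positive roots, each of squared
norm `2`, and `S` is the disjoint union of the positive roots and their negatives. -/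
theorem e6_positive_roots :
    (∀ v ∈ S, ∃ n : Fin 6 → ℤ, v = ∑ i, (n i : ℝ) • r i ∧
      ((∀ i, 0 ≤ n i) ∨ (∀ i, n i ≤ 0))) ∧
    Spos.ncard = 36 ∧
    (∀ v ∈ Spos, ⟪v, v⟫ = 2) ∧
    S = Spos ∪ (-Spos) ∧
    Disjoint Spos (-Spos) :=
  ⟨fun _ => E6.exists_coeffs_of_mem_S, E6.ncard_Spos, fun _ hv => E6.inner_self_of_mem_S hv.1,
    E6.S_eq_Spos_union_neg, E6.disjoint_Spos_neg⟩
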